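/- Let n ≥ 1 and let Φ_A = {±e_i : 1 ≤ i ≤ n} ∪ {±(e_j − e_k) : 1 ≤ j ≠ k ≤ n} be the set of roots of type A_n in ℝ^n, with dual lattice M = ℤ^n.atomLet P ⊆ ℝ^n be a lattice polytope cut out by Φ_A: that is, P is the convex hull of a nonempty finite subset of M, and there exist a finite subset S ⊆ Φ_A and real numbers c_v (v ∈ S) with P = {x ∈ ℝ^n : ⟨x, v⟩ ≥ c_v for all v ∈ S}. Then P is normal: for every positive integer m, every point of M lying in the dilate m·P is a sum of m points of M ∩ P. -/

import Mathlib

/-!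
Write a lattice point `x ∈ m • P` as `x = ∑_{t < m} y_t` with `y_t i = ⌊(x i + t) / m⌋`
(Hermite's identity). Every root `v` of type `A` pairs integrally with lattice points, so `P` is
also cut out by the rounded-up constraints `⌈c_v⌉ ≤ ⟨·, v⟩`, and `m ⌈c_v⌉ ≤ ⟨x, v⟩`.
The maps `a ↦ ⌊(a + t) / m⌋` are monotone, satisfy `⌊(a + t) / m⌋ - ⌊(b + t) / m⌋ ≥ ⌊(a - b) / m⌋`,
and, as `t < m`, stay below `⌈a / m⌉`; this is exactly what the roots `e_i`, `e_j - e_k` and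
`-e_i` need for each `y_t` to satisfy the rounded constraints.
-/

open Finset Pointwise

/-- The `i`-th standard basis vector of `ℝ^n`. -/
noncomputable def stdBasis (n : ℕ) (i : Fin n) : Fin n → ℝ := fun j => if j = i then 1 else 0

/-- The standard inner product on `ℝ^n`. -/
noncomputable def innerProd {n : ℕ} (u v : Fin n → ℝ) : ℝ := ∑ i, u i * v i

/-- The roots of type `A_n`: `±e_i` and `±(e_j - e_k)` for `j ≠ k`. -/
def typeA (n : ℕ) : Set (Fin n → ℝ) :=
  {v | ∃ i, v = stdBasis n i ∨ v = -stdBasis n i} ∪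
  {v | ∃ j k, j ≠ k ∧ v = stdBasis n j - stdBasis n k}

/-- The lattice `ℤ^n ⊆ ℝ^n`. -/
def intLattice (n : ℕ) : Set (Fin n → ℝ) := {u | ∀ i, ∃ m : ℤ, u i = m}

section IntegerRounding

variable {m a b q t : ℤ}

lemma le_add_ediv_of_mul_le (hm : 0 < m) (hq : q * m ≤ a) (ht : 0 ≤ t) : q ≤ (a + t) / m :=
  (Int.le_ediv_iff_mul_le hm).2 (by omega)

lemma add_ediv_le_of_le_mul (hm : 0 < m) (hq : a ≤ q * m) (ht : t < m) : (a + t) / m ≤ q := by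
  have := (Int.ediv_lt_iff_lt_mul hm (a := a + t) (b := q + 1)).2 (by linarith)
  omega

lemma le_add_ediv_sub_add_ediv_of_mul_le (hm : 0 < m) (hq : q * m ≤ a - b) :
    q ≤ (a + t) / m - (b + t) / m := by
  have hb := Int.ediv_mul_le (b + t) hm.ne'
  have : q + (b + t) / m ≤ (a + t) / m := (Int.le_ediv_iff_mul_le hm).2 (by linarith)
  omega

/-- Shifting `a` by one trades the summand `a / m` for `(a + m) / m = a / m + 1`. -/
lemma sum_range_add_one_add_ediv {m : ℕ} (hm : 0 < m) (a : ℤ) :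
    ∑ t ∈ range m, (a + 1 + t) / (m : ℤ) = ∑ t ∈ range m, (a + t) / m + 1 := by
  have shift := sum_range_succ' (fun t : ℕ => (a + t) / (m : ℤ)) m
  rw [sum_range_succ] at shift
  have hlast : (a + m) / (m : ℤ) = a / m + 1 := by
    simpa using Int.add_mul_ediv_right a 1 (by omega : (m : ℤ) ≠ 0)
  have hsucc : ∑ t ∈ range m, (a + 1 + t) / (m : ℤ) =
      ∑ t ∈ range m, (a + ((t + 1 : ℕ) : ℤ)) / m :=
    sum_congr rfl fun t _ => by push_cast; ring_nf
  simp only [Nat.cast_zero, add_zero, hlast] at shift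
  omega

lemma sum_range_add_ediv {m : ℕ} (hm : 0 < m) (a : ℤ) : ∑ t ∈ range m, (a + t) / m = a := by
  induction a using Int.induction_on with
  | zero =>
    exact sum_eq_zero fun t ht => Int.ediv_eq_zero_of_lt (by omega) (by simpa using ht)
  | succ k ih => rw [sum_range_add_one_add_ediv hm, ih]
  | pred k ih =>
    have := sum_range_add_one_add_ediv hm (-k - 1)
    rw [sub_add_cancel, ih] at this
    omega

end IntegerRounding

section Roots

variable {n : ℕ}

lemma innerProd_eq_dotProduct (u v : Fin n → ℝ) : innerProd u v = dotProduct u v := rfl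

lemma stdBasis_eq_single (i : Fin n) : stdBasis n i = Pi.single i 1 := by
  ext j; simp [stdBasis, Pi.single_apply]

lemma innerProd_stdBasis (u : Fin n → ℝ) (i : Fin n) : innerProd u (stdBasis n i) = u i := by
  simp [innerProd_eq_dotProduct, stdBasis_eq_single]

lemma isLinearMap_innerProd_left (v : Fin n → ℝ) : IsLinearMap ℝ (innerProd · v) :=
  ⟨fun x y => add_dotProduct x y v, fun r x => smul_dotProduct r x v⟩

lemma innerProd_smul_left (r : ℝ) (u v : Fin n → ℝ) : innerProd (r • u) v = r * innerProd u v :=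
  smul_dotProduct r u v

lemma innerProd_cases_of_mem_typeA {v : Fin n → ℝ} (hv : v ∈ typeA n) :
    (∃ i, ∀ u, innerProd u v = u i) ∨ (∃ i, ∀ u, innerProd u v = -u i) ∨
      ∃ j k, ∀ u, innerProd u v = u j - u k := by
  rcases hv with ⟨i, rfl | rfl⟩ | ⟨j, k, -, rfl⟩
  · exact .inl ⟨i, (innerProd_stdBasis · i)⟩
  · refine .inr (.inl ⟨i, fun u => ?_⟩)
    rw [innerProd_eq_dotProduct, dotProduct_neg, ← innerProd_eq_dotProduct, innerProd_stdBasis]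
  · refine .inr (.inr ⟨j, k, fun u => ?_⟩)
    rw [innerProd_eq_dotProduct, dotProduct_sub, ← innerProd_eq_dotProduct,
      ← innerProd_eq_dotProduct, innerProd_stdBasis, innerProd_stdBasis]

lemma exists_int_eq_innerProd {v : Fin n → ℝ} (hv : v ∈ typeA n) {u : Fin n → ℝ}
    (hu : u ∈ intLattice n) : ∃ z : ℤ, innerProd u v = z := by
  choose X hX using hu
  rcases innerProd_cases_of_mem_typeA hv with ⟨i, h⟩ | ⟨i, h⟩ | ⟨j, k, h⟩
  · exact ⟨X i, by rw [h, hX]⟩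
  · exact ⟨-X i, by rw [h, hX]; push_cast; ring⟩
  · exact ⟨X j - X k, by rw [h, hX, hX]; push_cast; ring⟩

lemma ceil_le_innerProd_of_mem_convexHull {V : Set (Fin n → ℝ)} (hV : V ⊆ intLattice n)
    {v : Fin n → ℝ} (hv : v ∈ typeA n) {c : ℝ} (hc : ∀ u ∈ V, c ≤ innerProd u v)
    {p : Fin n → ℝ} (hp : p ∈ convexHull ℝ V) : (⌈c⌉ : ℝ) ≤ innerProd p v := by
  refine convexHull_min (fun u hu => ?_) (convex_halfSpace_ge (isLinearMap_innerProd_left v) _) hp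
  obtain ⟨z, hz⟩ := exists_int_eq_innerProd hv (hV hu)
  have hcu := hc u hu
  change (⌈c⌉ : ℝ) ≤ innerProd u v
  rw [hz] at hcu ⊢
  exact_mod_cast Int.ceil_le.2 hcu

def hermiteSlice {ι : Type*} (m : ℕ) (X : ι → ℤ) (t : ℕ) : ι → ℤ := fun i => (X i + t) / m

lemma le_innerProd_hermiteSlice {v : Fin n → ℝ} (hv : v ∈ typeA n) {m : ℕ} (hm : 0 < m)
    (X : Fin n → ℤ) {t : ℕ} (ht : t < m) {q : ℤ}
    (hq : m * (q : ℝ) ≤ innerProd (fun k => (X k : ℝ)) v) :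
    (q : ℝ) ≤ innerProd (fun k => (hermiteSlice m X t k : ℝ)) v := by
  have hm' : (0 : ℤ) < m := by exact_mod_cast hm
  rcases innerProd_cases_of_mem_typeA hv with ⟨i, h⟩ | ⟨i, h⟩ | ⟨j, k, h⟩ <;>
    simp only [h, hermiteSlice] at hq ⊢
  · have : q * m ≤ X i := by exact_mod_cast (by linarith : (q : ℝ) * m ≤ X i)
    exact_mod_cast le_add_ediv_of_mul_le hm' this t.cast_nonneg
  · have : X i ≤ -q * m := by exact_mod_cast (by linarith : (X i : ℝ) ≤ -q * m)
    have := add_ediv_le_of_le_mul hm' this (by exact_mod_cast ht : (t : ℤ) < m)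
    have : q ≤ -((X i + t) / (m : ℤ)) := by omega
    exact_mod_cast this
  · have : q * m ≤ X j - X k := by exact_mod_cast (by linarith : (q : ℝ) * m ≤ X j - X k)
    exact_mod_cast le_add_ediv_sub_add_ediv_of_mul_le (t := t) hm' this

end Roots

theorem typeA_polytope_normal_general (n : ℕ) (P : Set (Fin n → ℝ))
    (hpoly : ∃ V : Set (Fin n → ℝ), V.Finite ∧ V.Nonempty ∧ V ⊆ intLattice n ∧
      P = convexHull ℝ V)
    (hcut : ∃ S : Finset (Fin n → ℝ), ↑S ⊆ typeA n ∧ ∃ c : (Fin n → ℝ) → ℝ,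
      P = {x | ∀ v ∈ S, c v ≤ innerProd x v})
    (m : ℕ) (hm : 0 < m) (x : Fin n → ℝ) (hx : x ∈ intLattice n) (hxm : x ∈ (m : ℝ) • P) :
    ∃ f : Fin m → (Fin n → ℝ), (∀ j, f j ∈ intLattice n ∧ f j ∈ P) ∧ x = ∑ j, f j := by
  obtain ⟨V, -, -, hV, rfl⟩ := hpoly
  obtain ⟨S, hS, c, hP⟩ := hcut
  obtain ⟨p, hp, hpx⟩ := Set.mem_smul_set.mp hxm
  choose X hX using hx
  have hxX : x = fun i => (X i : ℝ) := funext hX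
  refine ⟨fun t i => hermiteSlice m X t i, fun t => ⟨fun i => ⟨_, rfl⟩, ?_⟩, ?_⟩
  · rw [hP]
    intro v hv
    have hVc : ∀ u ∈ V, c v ≤ innerProd u v := fun u hu => by
      have hu' := subset_convexHull ℝ V hu
      rw [hP] at hu'
      exact hu' v hv
    have hpv := ceil_le_innerProd_of_mem_convexHull hV (hS hv) hVc hp
    refine (Int.le_ceil (c v)).trans (le_innerProd_hermiteSlice (hS hv) hm X t.2 ?_)
    rw [← hxX, ← hpx, innerProd_smul_left]
    gcongr
  · ext i
    rw [hX, Finset.sum_apply, ← sum_range_add_ediv hm (X i), Int.cast_sum,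
      ← Fin.sum_univ_eq_sum_range (fun t => (((X i + t) / m : ℤ) : ℝ))]
    rfl

/-- Every lattice polytope cut out by the root system `A_n` is normal: every lattice
point of `m·P` is a sum of `m` lattice points of `P`. -/
theorem typeA_polytope_normal (n : ℕ) (hn : 1 ≤ n) (P : Set (Fin n → ℝ))
    (hpoly : ∃ V : Set (Fin n → ℝ), V.Finite ∧ V.Nonempty ∧ V ⊆ intLattice n ∧
      P = convexHull ℝ V)
    (hcut : ∃ S : Finset (Fin n → ℝ), ↑S ⊆ typeA n ∧ ∃ c : (Fin n → ℝ) → ℝ,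
      P = {x | ∀ v ∈ S, c v ≤ innerProd x v})
    (m : ℕ) (hm : 0 < m) (x : Fin n → ℝ) (hx : x ∈ intLattice n) (hxm : x ∈ (m : ℝ) • P) :
    ∃ f : Fin m → (Fin n → ℝ), (∀ j, f j ∈ intLattice n ∧ f j ∈ P) ∧ x = ∑ j, f j :=
  typeA_polytope_normal_general n P hpoly hcut m hm x hx hxm
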